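/- For two words u = x₁…x_l and v = y₁…y_m over {A,B}, the equality ρ(u Z') + ρ̄(v Z') = 1 holds if and only if u = v (i.e., l = m and x_k = y_k for all k). -/

import Mathlib

/-! Since `theta x + thetaBar x = 1` for `x ∈ {A, B}` and both weights of `Z'` are `1`, the sum
`ρ(w Z') + ρ̄(w Z')` telescopes to `1`; so the equation says `ρ(u Z') = ρ(v Z')`. The map
`w ↦ ρ(w Z')` is injective on `{A, B}`-words: `ρ(w Z')` always lies in `(0, 1)`, so in
`ρ(x w Z') = theta x / 2 + ρ(w Z') / 2` the first letter is read off as the binary digit `theta x`. -/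

inductive L3 where
  | A : L3
  | B : L3
  | Z' : L3
deriving DecidableEq

def theta : L3 → ℚ
  | L3.A => 1
  | L3.B => 0
  | L3.Z' => 1

def thetaBar : L3 → ℚ
  | L3.A => 0
  | L3.B => 1
  | L3.Z' => 1

def rho : List L3 → ℚ
  | [] => 0
  | x :: w => theta x * (1/2) + (1/2) * rho w

def rhoBar : List L3 → ℚ
  | [] => 0
  | x :: w => thetaBar x * (1/2) + (1/2) * rhoBar w

lemma theta_eq_zero_or_eq_one (x : L3) : theta x = 0 ∨ theta x = 1 := by
  cases x <;> simp [theta]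

lemma theta_injOn : Set.InjOn theta {L3.Z'}ᶜ := by
  intro x hx y hy h
  cases x <;> cases y <;> simp_all [theta]

lemma theta_add_thetaBar {x : L3} (hx : x ≠ L3.Z') : theta x + thetaBar x = 1 := by
  cases x <;> simp_all [theta, thetaBar]

lemma rho_Z' : rho [L3.Z'] = 1 / 2 := by
  norm_num [rho, theta]

lemma rho_append_Z'_mem_Ioo (w : List L3) : rho (w ++ [L3.Z']) ∈ Set.Ioo 0 1 := by
  induction w with
  | nil => norm_num [rho_Z']
  | cons x w ih =>
    obtain ⟨hpos, hlt⟩ := ih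
    rcases theta_eq_zero_or_eq_one x with hx | hx <;>
      simp only [List.cons_append, rho, hx, Set.mem_Ioo] <;> constructor <;> linarith

lemma rho_cons_append_Z'_ne_half (x : L3) (w : List L3) : rho (x :: w ++ [L3.Z']) ≠ 1 / 2 := by
  obtain ⟨hpos, hlt⟩ := rho_append_Z'_mem_Ioo w
  rw [List.cons_append, rho]
  rcases theta_eq_zero_or_eq_one x with hx | hx <;> rw [hx] <;> intro h <;> linarith

lemma rho_add_rhoBar_append_Z' {w : List L3} (hw : L3.Z' ∉ w) :
    rho (w ++ [L3.Z']) + rhoBar (w ++ [L3.Z']) = 1 := by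
  induction w with
  | nil => norm_num [rho, rhoBar, theta, thetaBar]
  | cons x w ih =>
    rw [List.mem_cons, not_or] at hw
    have hx := theta_add_thetaBar (Ne.symm hw.1)
    simp only [List.cons_append, rho, rhoBar]
    linear_combination (1 / 2 : ℚ) * hx + (1 / 2 : ℚ) * ih hw.2

lemma rho_append_Z'_injOn : Set.InjOn (fun w => rho (w ++ [L3.Z'])) {w | L3.Z' ∉ w} := by
  intro u (hu : L3.Z' ∉ u) v (hv : L3.Z' ∉ v) (h : rho (u ++ [L3.Z']) = rho (v ++ [L3.Z']))
  induction u generalizing v with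
  | nil =>
    cases v with
    | nil => rfl
    | cons y v => exact absurd (h.symm.trans rho_Z') (rho_cons_append_Z'_ne_half y v)
  | cons x u ih =>
    cases v with
    | nil => exact absurd (h.trans rho_Z') (rho_cons_append_Z'_ne_half x u)
    | cons y v =>
      simp only [List.mem_cons, not_or] at hu hv
      simp only [List.cons_append, rho] at h
      obtain ⟨hu0, hu1⟩ := rho_append_Z'_mem_Ioo u
      obtain ⟨hv0, hv1⟩ := rho_append_Z'_mem_Ioo v
      -- two binary digits differing by less than `1` are equal
      have htheta : theta x = theta y := by
        rcases theta_eq_zero_or_eq_one x with hx | hx <;>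
          rcases theta_eq_zero_or_eq_one y with hy | hy <;> rw [hx, hy] at h ⊢ <;> linarith
      have hxy : x = y := theta_injOn (Ne.symm hu.1) (Ne.symm hv.1) htheta
      have htail : rho (u ++ [L3.Z']) = rho (v ++ [L3.Z']) := by linarith
      rw [hxy, ih hu.2 hv.2 htail]

theorem rho_add_rhoBar_eq_one_iff_general (u v : List L3)
    (hu : ∀ x ∈ u, x = L3.A ∨ x = L3.B) (hv : ∀ x ∈ v, x = L3.A ∨ x = L3.B) :
    rho (u ++ [L3.Z']) + rhoBar (v ++ [L3.Z']) = 1 ↔ u = v := by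
  have hu' : L3.Z' ∉ u := fun h => by simpa using hu _ h
  have hv' : L3.Z' ∉ v := fun h => by simpa using hv _ h
  rw [← rho_add_rhoBar_append_Z' hv', add_left_inj]
  exact rho_append_Z'_injOn.eq_iff hu' hv'

/-- For nonempty words u, v over {A,B}: ρ(u Z') + ρ̄(v Z') = 1 iff u = v. -/
theorem rho_add_rhoBar_eq_one_iff (u v : List L3)
    (hu : ∀ x ∈ u, x = L3.A ∨ x = L3.B) (hv : ∀ x ∈ v, x = L3.A ∨ x = L3.B)
    (hune : u ≠ []) (hvne : v ≠ []) :
    rho (u ++ [L3.Z']) + rhoBar (v ++ [L3.Z']) = 1 ↔ u = v :=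
  rho_add_rhoBar_eq_one_iff_general u v hu hv
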